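/- Exponential mechanism is differentially private: if the loss satisfies sup_{z∈Z, h∈H} |ℓ(z,h)| ≤ B, and A(Z) samples h with density proportional to exp(−γ Σᵢ ℓ(zᵢ,h)), then for any adjacent datasets Z, Z' (differing in one entry) and any measurable H₀ ⊆ H, P(A(Z) ∈ H₀) ≤ exp(4Bγ)·P(A(Z') ∈ H₀), i.e., A is 4Bγ-differentially private. -/

import Mathlib

/-!
Replacing one data point moves the exponent `Σᵢ ℓ(zᵢ, h)` by at most `2B`, uniformly in `h`,
so the two unnormalized densities are within a factor `exp (2Bγ)` of each other pointwise.
This factor is paid once in the numerator `∫_{H₀}` and once in the normalizing constant,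
giving `exp (4Bγ)` for the normalized probabilities.
-/

open MeasureTheory Real

theorem abs_sum_sub_sum_le_of_forall_ne_eq {ι : Type*} [Fintype ι] {a b : ι → ℝ} {B : ℝ}
    (j : ι) (hab : ∀ i, i ≠ j → a i = b i) (ha : |a j| ≤ B) (hb : |b j| ≤ B) :
    |∑ i, a i - ∑ i, b i| ≤ 2 * B := by
  rw [← Finset.sum_sub_distrib,
    Finset.sum_eq_single j (fun i _ hij => by rw [hab i hij, sub_self]) (by simp)]
  linarith [abs_sub (a j) (b j)]

theorem Real.exp_neg_mul_le_exp_mul_mul_exp_neg_mul {γ C u v : ℝ} (hγ : 0 ≤ γ)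
    (huv : |u - v| ≤ C) : exp (-γ * u) ≤ exp (C * γ) * exp (-γ * v) := by
  rw [← exp_add, exp_le_exp]
  nlinarith [mul_le_mul_of_nonneg_left (neg_le_of_abs_le huv) hγ]

section Integral

variable {α : Type*} [MeasurableSpace α] {μ : Measure α} {f g : α → ℝ} {c : ℝ}

theorem integral_le_const_mul_integral (hf : Integrable f μ) (hg : Integrable g μ)
    (hfg : ∀ᵐ x ∂μ, f x ≤ c * g x) : ∫ x, f x ∂μ ≤ c * ∫ x, g x ∂μ := by
  rw [← integral_const_mul]
  exact integral_mono_ae hf (hg.const_mul c) hfg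

/-- If `∫ f = 0` the left side is `0` by `x / 0 = 0`; otherwise `∫ f ≤ c * ∫ g` forces
`∫ g > 0`. -/
theorem setIntegral_div_integral_le_mul_mul (hf : Integrable f μ) (hg : Integrable g μ)
    (hf0 : 0 ≤ᵐ[μ] f) (hg0 : 0 ≤ᵐ[μ] g)
    (hfg : ∀ᵐ x ∂μ, f x ≤ c * g x) (hgf : ∀ᵐ x ∂μ, g x ≤ c * f x) (s : Set α) :
    (∫ x in s, f x ∂μ) / ∫ x, f x ∂μ ≤ c * c * ((∫ x in s, g x ∂μ) / ∫ x, g x ∂μ) := by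
  have hnum : ∫ x in s, f x ∂μ ≤ c * ∫ x in s, g x ∂μ :=
    integral_le_const_mul_integral hf.restrict hg.restrict (ae_restrict_of_ae hfg)
  have hden : ∫ x, g x ∂μ ≤ c * ∫ x, f x ∂μ := integral_le_const_mul_integral hg hf hgf
  have hg_nonneg : 0 ≤ ∫ x, g x ∂μ := integral_nonneg_of_ae hg0
  have hfs_nonneg : 0 ≤ ∫ x in s, f x ∂μ := integral_nonneg_of_ae (ae_restrict_of_ae hf0)
  have hgs_nonneg : 0 ≤ ∫ x in s, g x ∂μ := integral_nonneg_of_ae (ae_restrict_of_ae hg0)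
  rcases (integral_nonneg_of_ae hf0).eq_or_lt with hf_zero | hf_pos
  · rw [← hf_zero, div_zero]
    exact mul_nonneg (mul_self_nonneg c) (div_nonneg hgs_nonneg hg_nonneg)
  have hg_pos : 0 < ∫ x, g x ∂μ := hg_nonneg.lt_of_ne' fun hg_zero => by
    have := integral_le_const_mul_integral hf hg hfg
    rw [hg_zero, mul_zero] at this
    exact hf_pos.not_ge this
  rw [← mul_div_assoc, div_le_div_iff₀ hf_pos hg_pos]
  calc (∫ x in s, f x ∂μ) * ∫ x, g x ∂μ
      ≤ (c * ∫ x in s, g x ∂μ) * (c * ∫ x, f x ∂μ) :=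
        mul_le_mul hnum hden hg_nonneg (hfs_nonneg.trans hnum)
    _ = c * c * (∫ x in s, g x ∂μ) * ∫ x, f x ∂μ := by ring

end Integral

theorem exponential_mechanism_dp_general
    {𝒵 H : Type*} [MeasurableSpace 𝒵] [MeasurableSpace H]
    (ν : Measure H) {n : ℕ}
    (ℓ : 𝒵 → H → ℝ) (B γ : ℝ) (hγ : 0 ≤ γ)
    (hB : ∀ (z : 𝒵) (h : H), |ℓ z h| ≤ B)
    (hKint : ∀ Z : Fin n → 𝒵,
      Integrable (fun h => Real.exp (-γ * ∑ i, ℓ (Z i) h)) ν) :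
    ∀ Z Z' : Fin n → 𝒵, (∃ j, ∀ i, i ≠ j → Z i = Z' i) →
      ∀ H₀ : Set H, MeasurableSet H₀ →
        (∫ h in H₀, Real.exp (-γ * ∑ i, ℓ (Z i) h) ∂ν) /
            (∫ h, Real.exp (-γ * ∑ i, ℓ (Z i) h) ∂ν)
          ≤ Real.exp (4 * B * γ) *
            ((∫ h in H₀, Real.exp (-γ * ∑ i, ℓ (Z' i) h) ∂ν) /
              (∫ h, Real.exp (-γ * ∑ i, ℓ (Z' i) h) ∂ν)) := by
  intro Z Z' ⟨j, hj⟩ H₀ _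
  have hshift : ∀ h, |∑ i, ℓ (Z i) h - ∑ i, ℓ (Z' i) h| ≤ 2 * B := fun h =>
    abs_sum_sub_sum_le_of_forall_ne_eq j (fun i hi => by rw [hj i hi]) (hB _ _) (hB _ _)
  rw [show 4 * B * γ = 2 * B * γ + 2 * B * γ by ring, exp_add]
  exact setIntegral_div_integral_le_mul_mul (hKint Z) (hKint Z')
    (.of_forall fun _ => (exp_pos _).le) (.of_forall fun _ => (exp_pos _).le)
    (.of_forall fun h => exp_neg_mul_le_exp_mul_mul_exp_neg_mul hγ (hshift h))
    (.of_forall fun h => exp_neg_mul_le_exp_mul_mul_exp_neg_mul hγ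
      (abs_sub_comm (∑ i, ℓ (Z i) h) _ ▸ hshift h)) H₀

/-- The exponential mechanism is differentially private: if `|ℓ(z,h)| ≤ B` uniformly
and `A(Z)` samples `h` with density proportional to `exp(−γ Σᵢ ℓ(zᵢ,h))` w.r.t. `ν`,
then for adjacent datasets `Z, Z'` (differing in one entry) and any measurable set
`H₀`, `P(A(Z) ∈ H₀) ≤ exp(4Bγ)·P(A(Z') ∈ H₀)`, i.e. `A` is `4Bγ`-differentially
private. -/
theorem exponential_mechanism_dp
    {𝒵 H : Type*} [MeasurableSpace 𝒵] [MeasurableSpace H]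
    (ν : Measure H) {n : ℕ}
    (ℓ : 𝒵 → H → ℝ) (B γ : ℝ) (hγ : 0 ≤ γ)
    (hB : ∀ (z : 𝒵) (h : H), |ℓ z h| ≤ B)
    (hKint : ∀ Z : Fin n → 𝒵,
      Integrable (fun h => Real.exp (-γ * ∑ i, ℓ (Z i) h)) ν)
    (hKpos : ∀ Z : Fin n → 𝒵,
      0 < ∫ h, Real.exp (-γ * ∑ i, ℓ (Z i) h) ∂ν) :
    ∀ Z Z' : Fin n → 𝒵, (∃ j, ∀ i, i ≠ j → Z i = Z' i) →
      ∀ H₀ : Set H, MeasurableSet H₀ →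
        (∫ h in H₀, Real.exp (-γ * ∑ i, ℓ (Z i) h) ∂ν) /
            (∫ h, Real.exp (-γ * ∑ i, ℓ (Z i) h) ∂ν)
          ≤ Real.exp (4 * B * γ) *
            ((∫ h in H₀, Real.exp (-γ * ∑ i, ℓ (Z' i) h) ∂ν) /
              (∫ h, Real.exp (-γ * ∑ i, ℓ (Z' i) h) ∂ν)) :=
  exponential_mechanism_dp_general ν ℓ B γ hγ hB hKint
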